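/- Let f : U(n) → ℂ be the restriction of a holomorphic function F on an open subset of GL(n,ℂ). Then τ(f) = −Σ_{i,j,k,ℓ} (∂²f/∂z_{ij}∂z_{kℓ})·z_{kj}z_{iℓ} − n·Σ_{i,j} (∂f/∂z_{ij})·z_{ij}, where τ is the Laplace–Beltrami operator of U(n) with the left-invariant metric from ⟨Z,W⟩ = Re tr(ZW*). -/

import Mathlib

/-!
Along the left-invariant vector field of `Z`, `s ↦ F (p * exp (s • Z))` has second derivative
`D²F(p)(pZ, pZ) + DF(p)(pZ²)` at `0`. This needs `F` to be twice complex differentiable, which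
follows from the Cauchy integral formula on complex lines, differentiated under the integral sign.
Each element `Z` of the basis is symmetric or antisymmetric, so `[Z, Zᵀ] = 0` and
`τ(F)(p) = Σ_Z B(Z, Z)` for the bilinear form `B(X, Y) = D²F(p)(pX, pY) + DF(p)(pXY)`.
Pairing `Y_rs = (E_rs − E_sr)/√2` with `iX_rs = i(E_rs + E_sr)/√2` turns this into
`−Σ_{r,s} B(E_rs, E_sr)`; expanding `pE_rs = Σ_k p_kr E_ks` gives the second-order term, and
`Σ_{r,s} E_rs E_sr = n • 1` the first-order one.
-/

open Matrix
open scoped BigOperators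

variable {n : ℕ}

attribute [local instance] Matrix.normedAddCommGroup Matrix.normedSpace

/-- The derivative of `f` at `p` along the left-invariant vector field determined by
`Z ∈ 𝔤𝔩(n,ℂ)`:  `Z(f)(p) = d/ds f(p·exp(sZ))|_{s=0}`. -/
noncomputable def lieD (Z : Matrix (Fin n) (Fin n) ℂ)
    (f : Matrix (Fin n) (Fin n) ℂ → ℂ) (p : Matrix (Fin n) (Fin n) ℂ) : ℂ :=
  deriv (fun s : ℝ => f (p * NormedSpace.exp (s • Z))) 0

/-- The second derivative `Z²(f)(p) = d²/ds² f(p·exp(sZ))|_{s=0}`. -/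
noncomputable def lieD2 (Z : Matrix (Fin n) (Fin n) ℂ)
    (f : Matrix (Fin n) (Fin n) ℂ → ℂ) (p : Matrix (Fin n) (Fin n) ℂ) : ℂ :=
  iteratedDeriv 2 (fun s : ℝ => f (p * NormedSpace.exp (s • Z))) 0

/-- The contribution `Z²(f) − [Z,Zᵗ]_𝔤(f)` of a basis vector `Z` to the tension field.
(For each element of the canonical basis of `𝔲(n)` below, `[Z,Zᵗ] = 0`, so the bracket
term is its own orthogonal projection onto `𝔲(n)`.) -/
noncomputable def tensTerm (Z : Matrix (Fin n) (Fin n) ℂ)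
    (f : Matrix (Fin n) (Fin n) ℂ → ℂ) (p : Matrix (Fin n) (Fin n) ℂ) : ℂ :=
  lieD2 Z f p - lieD (Z * Zᵀ - Zᵀ * Z) f p

/-- `Y_{rs} = (E_{rs} − E_{sr})/√2`. -/
noncomputable def Ybas (r s : Fin n) : Matrix (Fin n) (Fin n) ℂ :=
  ((Real.sqrt 2)⁻¹ : ℝ) • (Matrix.single r s (1 : ℂ) - Matrix.single s r (1 : ℂ))

/-- `iX_{rs} = i(E_{rs} + E_{sr})/√2`. -/
noncomputable def iXbas (r s : Fin n) : Matrix (Fin n) (Fin n) ℂ :=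
  ((Real.sqrt 2)⁻¹ : ℝ) •
    (Complex.I • (Matrix.single r s (1 : ℂ) + Matrix.single s r (1 : ℂ)))

/-- `iD_t = iE_{tt}`. -/
noncomputable def iDbas (t : Fin n) : Matrix (Fin n) (Fin n) ℂ :=
  Complex.I • Matrix.single t t (1 : ℂ)

/-- The Laplace–Beltrami operator `τ(f) = Σ_{Z∈ℬ} (Z²(f) − [Z,Zᵗ]_𝔤(f))` of `U(n)`
with the left-invariant metric induced by `⟨Z,W⟩ = Re tr(ZW*)`, with respect to the
canonical orthonormal basis `ℬ = {Y_{rs}, iX_{rs} : r<s} ∪ {iD_t}` of `𝔲(n)`. -/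
noncomputable def tension (f : Matrix (Fin n) (Fin n) ℂ → ℂ)
    (p : Matrix (Fin n) (Fin n) ℂ) : ℂ :=
  (∑ r, ∑ s, if r < s then tensTerm (Ybas r s) f p + tensTerm (iXbas r s) f p else 0)
    + ∑ t, tensTerm (iDbas t) f p

/-- The conformality operator `κ(f,h) = Σ_{Z∈ℬ} Z(f)Z(h)` on `U(n)`. -/
noncomputable def conf (f h : Matrix (Fin n) (Fin n) ℂ → ℂ)
    (p : Matrix (Fin n) (Fin n) ℂ) : ℂ :=
  (∑ r, ∑ s, if r < s then lieD (Ybas r s) f p * lieD (Ybas r s) h p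
      + lieD (iXbas r s) f p * lieD (iXbas r s) h p else 0)
    + ∑ t, lieD (iDbas t) f p * lieD (iDbas t) h p

/-- The complex partial derivative `∂F/∂z_{ij}`. -/
noncomputable def cpd (i j : Fin n) (F : Matrix (Fin n) (Fin n) ℂ → ℂ)
    (z : Matrix (Fin n) (Fin n) ℂ) : ℂ :=
  fderiv ℂ F z (Matrix.single i j (1 : ℂ))

open Filter Topology Metric

section Holomorphic

variable {E G : Type*} [NormedAddCommGroup E] [NormedSpace ℂ E] [NormedAddCommGroup G]
  [NormedSpace ℂ G] {F : E → G}

lemma add_smul_mem_closedBall {p z v : E} {a R : ℝ} {t : ℂ} (hz : z ∈ closedBall p a)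
    (ht : ‖t‖ ≤ R) : z + t • v ∈ closedBall p (a + R * ‖v‖) := by
  rw [mem_closedBall, dist_eq_norm] at hz ⊢
  rw [add_sub_right_comm]
  refine (norm_add_le _ _).trans (add_le_add hz ?_)
  rw [norm_smul]
  exact mul_le_mul_of_nonneg_right ht (norm_nonneg v)

lemma mapsTo_add_smul_closedBall (w v : E) (R : ℝ) :
    Set.MapsTo (fun t : ℂ => w + t • v) (closedBall 0 R) (closedBall w (R * ‖v‖)) :=
  fun _ ht => by
    simpa using add_smul_mem_closedBall (v := v) (mem_closedBall_self (x := w) le_rfl)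
      (mem_closedBall_zero_iff.1 ht)

lemma differentiableOn_comp_add_smul {s : Set E} (hF : ∀ x ∈ s, DifferentiableAt ℂ F x)
    (w v : E) {T : Set ℂ} (hT : Set.MapsTo (fun t : ℂ => w + t • v) T s) :
    DifferentiableOn ℂ (fun t : ℂ => F (w + t • v)) T := fun t ht =>
  ((hF _ (hT ht)).comp t ((differentiableAt_id.smul_const v).const_add w)).differentiableWithinAt

lemma deriv_comp_add_smul_zero (w v : E) (hF : DifferentiableAt ℂ F w) :
    deriv (fun t : ℂ => F (w + t • v)) 0 = fderiv ℂ F w v := by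
  have hline : HasDerivAt (fun t : ℂ => w + t • v) v 0 := by
    simpa using ((hasDerivAt_id (0 : ℂ)).smul_const v).const_add w
  exact (hF.hasFDerivAt.comp_hasDerivAt_of_eq (0 : ℂ) hline (by simp)).deriv

theorem norm_fderiv_le_of_forall_mem_closedBall_norm_le {w : E} {r M : ℝ} (hr : 0 < r)
    (hF : ∀ x ∈ closedBall w r, DifferentiableAt ℂ F x)
    (hM : ∀ x ∈ closedBall w r, ‖F x‖ ≤ M) : ‖fderiv ℂ F w‖ ≤ M / r := by
  have hM0 : 0 ≤ M := (norm_nonneg _).trans (hM w (mem_closedBall_self hr.le))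
  refine ContinuousLinearMap.opNorm_le_bound _ (by positivity) fun v => ?_
  rcases eq_or_ne v 0 with rfl | hv
  · simp
  have hv0 : 0 < ‖v‖ := norm_pos_iff.2 hv
  have hball : closedBall w (r / ‖v‖ * ‖v‖) = closedBall w r := by
    rw [div_mul_cancel₀ _ hv0.ne']
  have hmaps := hball ▸ mapsTo_add_smul_closedBall w v (r / ‖v‖)
  have hd := ((differentiableOn_comp_add_smul hF w v hmaps).mono
    closure_ball_subset_closedBall).diffContOnCl
  have := Complex.norm_deriv_le_of_forall_mem_sphere_norm_le (by positivity) hd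
    fun t ht => hM _ (hmaps (sphere_subset_closedBall ht))
  rw [deriv_comp_add_smul_zero w v (hF w (mem_closedBall_self hr.le))] at this
  calc ‖fderiv ℂ F w v‖ ≤ M / (r / ‖v‖) := this
    _ = M / r * ‖v‖ := by field_simp

theorem two_pi_I_smul_fderiv_eq_circleIntegral [CompleteSpace G] {z v : E} {R : ℝ} (hR : 0 < R)
    (hF : ∀ x ∈ closedBall z (R * ‖v‖), DifferentiableAt ℂ F x) :
    (2 * Real.pi * Complex.I) • fderiv ℂ F z v
      = ∮ t in C(0, R), (t ^ 2)⁻¹ • F (z + t • v) := by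
  have hd := differentiableOn_comp_add_smul hF z v (mapsTo_add_smul_closedBall z v R)
  rw [← deriv_comp_add_smul_zero z v (hF z (mem_closedBall_self (by positivity))),
    ← hd.deriv_eq_smul_circleIntegral hR]
  simp

theorem hasFDerivAt_circleIntegral_of_dominated [CompleteSpace G] {g : E → ℂ → G}
    {g' : E → ℂ → E →L[ℂ] G} {p : E} {s : Set E} {c : ℂ} {R C : ℝ} (hR : 0 ≤ R)
    (hs : s ∈ 𝓝 p) (hg : ∀ z ∈ s, ContinuousOn (g z) (sphere c R))
    (hg'_meas : MeasureTheory.AEStronglyMeasurable fun θ => g' p (circleMap c R θ))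
    (hbound : ∀ z ∈ s, ∀ t ∈ sphere c R, ‖g' z t‖ ≤ C)
    (hdiff : ∀ z ∈ s, ∀ t ∈ sphere c R, HasFDerivAt (fun z => g z t) (g' z t) z) :
    HasFDerivAt (fun z => ∮ t in C(c, R), g z t) (∮ t in C(c, R), g' p t) p := by
  have hcirc (θ : ℝ) : circleMap c R θ ∈ sphere c R := circleMap_mem_sphere c hR θ
  have hderiv : Continuous fun θ => circleMap 0 R θ * Complex.I :=
    (continuous_circleMap 0 R).mul continuous_const
  have hcont (z : E) (hz : z ∈ s) :
      Continuous fun θ => (circleMap 0 R θ * Complex.I) • g z (circleMap c R θ) :=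
    hderiv.smul ((hg z hz).comp_continuous (continuous_circleMap c R) hcirc)
  simp only [circleIntegral, deriv_circleMap]
  refine intervalIntegral.hasFDerivAt_integral_of_dominated_of_fderiv_le (𝕜 := ℂ)
    (F := fun z θ => (circleMap 0 R θ * Complex.I) • g z (circleMap c R θ))
    (F' := fun z θ => (circleMap 0 R θ * Complex.I) • g' z (circleMap c R θ))
    (bound := fun _ => R * C) hs ?_
    ((hcont p (mem_of_mem_nhds hs)).intervalIntegrable (μ := MeasureTheory.volume) _ _) ?_
    ?_ intervalIntegrable_const ?_
  · filter_upwards [hs] with z hz using (hcont z hz).aestronglyMeasurable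
  · exact (hderiv.aestronglyMeasurable.smul hg'_meas).restrict
  · refine Eventually.of_forall fun θ _ z hz => ?_
    rw [norm_smul, norm_mul, norm_circleMap_zero, Complex.norm_I, mul_one, abs_of_nonneg hR]
    exact mul_le_mul_of_nonneg_left (hbound z hz _ (hcirc θ)) hR
  · exact Eventually.of_forall fun θ _ z hz => (hdiff z hz _ (hcirc θ)).const_smul _

theorem hasFDerivAt_circleIntegral_inv_sq_smul [FiniteDimensional ℂ E] [CompleteSpace G]
    [SecondCountableTopology G] {p v : E} {ε R C : ℝ} (hε : 0 < ε) (hR : 0 < R)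
    (hF : ∀ x ∈ closedBall p (ε + R * ‖v‖), DifferentiableAt ℂ F x)
    (hC : ∀ x ∈ closedBall p (ε + R * ‖v‖), ‖fderiv ℂ F x‖ ≤ C) :
    HasFDerivAt (fun z => ∮ t in C(0, R), (t ^ 2)⁻¹ • F (z + t • v))
      (∮ t in C(0, R), (t ^ 2)⁻¹ • fderiv ℂ F (p + t • v)) p := by
  have hball {z : E} (hz : z ∈ ball p ε) {t : ℂ} (ht : t ∈ sphere 0 R) :
      z + t • v ∈ closedBall p (ε + R * ‖v‖) :=
    add_smul_mem_closedBall (ball_subset_closedBall hz) (mem_sphere_zero_iff_norm.1 ht).le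
  have ht0 {t : ℂ} (ht : t ∈ sphere 0 R) : t ^ 2 ≠ 0 := pow_ne_zero 2 (ne_of_mem_sphere ht hR.ne')
  refine hasFDerivAt_circleIntegral_of_dominated (g := fun z t => (t ^ 2)⁻¹ • F (z + t • v))
    (g' := fun z t => (t ^ 2)⁻¹ • fderiv ℂ F (z + t • v)) (C := (R ^ 2)⁻¹ * C) hR.le
    (ball_mem_nhds p hε) (fun z hz => ?_) ?_ (fun z hz t ht => ?_) (fun z hz t ht => ?_)
  · refine ((continuousOn_id.pow 2).inv₀ fun t ht => ht0 ht).smul ?_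
    exact ContinuousOn.comp (fun x hx => (hF x hx).continuousAt.continuousWithinAt)
      (by fun_prop) fun t ht => hball hz ht
  · borelize E
    have hc : Continuous fun θ => (circleMap 0 R θ ^ 2)⁻¹ :=
      ((continuous_circleMap 0 R).pow 2).inv₀ fun θ => ht0 (circleMap_mem_sphere 0 hR.le θ)
    exact hc.aestronglyMeasurable.smul
      ((measurable_fderiv ℂ F).comp (by fun_prop)).aestronglyMeasurable
  · rw [norm_smul, norm_inv, norm_pow, mem_sphere_zero_iff_norm.1 ht]
    exact mul_le_mul_of_nonneg_left (hC _ (hball hz ht)) (by positivity)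
  · exact ((hasFDerivAt_comp_add_right _).2 (hF _ (hball hz ht)).hasFDerivAt).const_smul (t ^ 2)⁻¹

theorem DifferentiableOn.differentiableAt_fderiv_apply [FiniteDimensional ℂ E] [CompleteSpace G]
    [SecondCountableTopology G] {U : Set E} (hF : DifferentiableOn ℂ F U) (hU : IsOpen U)
    {p : E} (hp : p ∈ U) (v : E) : DifferentiableAt ℂ (fun z => fderiv ℂ F z v) p := by
  rcases eq_or_ne v 0 with rfl | hv
  · simp
  obtain ⟨ε, hε, hεU⟩ : ∃ ε > 0, closedBall p (3 * ε) ⊆ U := by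
    obtain ⟨r, hr, hrU⟩ := nhds_basis_closedBall.mem_iff.1 (hU.mem_nhds hp)
    exact ⟨r / 3, by positivity, by rwa [mul_div_cancel₀ _ three_ne_zero]⟩
  have hdiff : ∀ x ∈ closedBall p (3 * ε), DifferentiableAt ℂ F x := fun x hx =>
    hF.differentiableAt (hU.mem_nhds (hεU hx))
  obtain ⟨M, hM⟩ := (isCompact_closedBall p (3 * ε)).exists_bound_of_continuousOn
    (hF.continuousOn.mono hεU)
  have hsub {x : E} (hx : x ∈ closedBall p (ε + ε)) : closedBall x ε ⊆ closedBall p (3 * ε) :=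
    closedBall_subset_closedBall' (by rw [mem_closedBall] at hx; linarith)
  have hbound : ∀ x ∈ closedBall p (ε + ε), ‖fderiv ℂ F x‖ ≤ M / ε := fun x hx =>
    norm_fderiv_le_of_forall_mem_closedBall_norm_le hε (fun y hy => hdiff y (hsub hx hy))
      (fun y hy => hM y (hsub hx hy))
  set R := ε / ‖v‖
  have hR : 0 < R := div_pos hε (norm_pos_iff.2 hv)
  have hRv : R * ‖v‖ = ε := div_mul_cancel₀ _ (norm_ne_zero_iff.2 hv)
  have hkey := hasFDerivAt_circleIntegral_inv_sq_smul (F := F) (v := v) hε hR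
    (by rw [hRv]; exact fun x hx => hdiff x (closedBall_subset_closedBall (by linarith) hx))
    (by rw [hRv]; exact hbound)
  refine (hkey.differentiableAt.fun_const_smul (2 * Real.pi * Complex.I : ℂ)⁻¹)
    |>.congr_of_eventuallyEq ?_
  filter_upwards [ball_mem_nhds p hε] with z hz
  rw [← two_pi_I_smul_fderiv_eq_circleIntegral hR, inv_smul_smul₀ Complex.two_pi_I_ne_zero]
  intro y hy
  rw [hRv] at hy
  exact hdiff y (hsub (ball_subset_closedBall (ball_subset_ball (by linarith) hz)) hy)

theorem differentiableAt_clm_apply_iff {𝕜 D E G : Type*} [NontriviallyNormedField 𝕜]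
    [CompleteSpace 𝕜] [NormedAddCommGroup D] [NormedSpace 𝕜 D] [NormedAddCommGroup E]
    [NormedSpace 𝕜 E] [FiniteDimensional 𝕜 E] [NormedAddCommGroup G] [NormedSpace 𝕜 G]
    {f : D → E →L[𝕜] G} {x : D} :
    DifferentiableAt 𝕜 f x ↔ ∀ y, DifferentiableAt 𝕜 (fun x => f x y) x := by
  refine ⟨fun h y => h.clm_apply (differentiableAt_const y), fun h => ?_⟩
  let e₁ :=
    ContinuousLinearEquiv.ofFinrankEq (Module.finrank_fin_fun 𝕜 (n := Module.finrank 𝕜 E)).symm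
  let e₂ := (e₁.arrowCongr (1 : G ≃L[𝕜] G)).trans (ContinuousLinearEquiv.piRing (Fin _))
  have : f = e₂.symm ∘ (e₂ ∘ f) := by ext1 z; simp
  rw [this]
  exact e₂.symm.differentiableAt.comp x (differentiableAt_pi.2 fun i => h _)

theorem DifferentiableOn.differentiableAt_fderiv [FiniteDimensional ℂ E] [CompleteSpace G]
    [SecondCountableTopology G] {U : Set E} (hF : DifferentiableOn ℂ F U) (hU : IsOpen U)
    {p : E} (hp : p ∈ U) : DifferentiableAt ℂ (fderiv ℂ F) p :=
  differentiableAt_clm_apply_iff.2 (hF.differentiableAt_fderiv_apply hU hp)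

theorem deriv_deriv_comp_eq {c c' : ℝ → E} {c'' : E} {t : ℝ}
    (hc : ∀ᶠ s in 𝓝 t, HasDerivAt c (c' s) s) (hc' : HasDerivAt c' c'' t)
    (hF : ∀ᶠ z in 𝓝 (c t), DifferentiableAt ℂ F z)
    (hF' : DifferentiableAt ℂ (fderiv ℂ F) (c t)) :
    deriv (deriv fun s => F (c s)) t
      = fderiv ℂ (fderiv ℂ F) (c t) (c' t) (c' t) + fderiv ℂ F (c t) c'' := by
  have hct : Tendsto c (𝓝 t) (𝓝 (c t)) := hc.self_of_nhds.continuousAt.tendsto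
  have hderiv : deriv (fun s => F (c s)) =ᶠ[𝓝 t] fun s => fderiv ℂ F (c s) (c' s) := by
    filter_upwards [hc, hct.eventually hF] with s hcs hFs
    exact ((hFs.hasFDerivAt.restrictScalars ℝ).comp_hasDerivAt s hcs).deriv
  have happ := (hF'.hasFDerivAt.comp (f := Prod.fst) (c t, c' t) hasFDerivAt_fst).clm_apply
    hasFDerivAt_snd
  have h2 := (happ.restrictScalars ℝ).comp_hasDerivAt t (hc.self_of_nhds.prodMk hc')
  rw [hderiv.deriv_eq]
  exact h2.deriv.trans (by simp [add_comm])

theorem fderiv_fderiv_apply {x : E} (hF' : DifferentiableAt ℂ (fderiv ℂ F) x) (v w : E) :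
    fderiv ℂ (fun z => fderiv ℂ F z v) x w = fderiv ℂ (fderiv ℂ F) x w v := by
  simp [fderiv_clm_apply hF' (differentiableAt_const v)]

end Holomorphic

section MatrixExp

variable {m : Type*} [Fintype m] [DecidableEq m]

theorem hasDerivAt_mul_exp_smul_mul (p q Z : Matrix m m ℂ) (t : ℝ) :
    HasDerivAt (fun s : ℝ => p * NormedSpace.exp (s • Z) * q)
      (p * NormedSpace.exp (t • Z) * Z * q) t := by
  -- the sup norm is not submultiplicative, but the slope only sees the topology, which the
  -- operator norm induces as well
  refine hasDerivAt_iff_tendsto_slope.mpr ?_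
  let _ : NormedAddCommGroup (Matrix m m ℂ) := Matrix.linftyOpNormedAddCommGroup
  let _ : NormedSpace ℝ (Matrix m m ℂ) := Matrix.linftyOpNormedSpace
  let _ : NormedRing (Matrix m m ℂ) := Matrix.linftyOpNormedRing
  let _ : NormedAlgebra ℝ (Matrix m m ℂ) := Matrix.linftyOpNormedAlgebra
  have h := ((hasDerivAt_exp_smul_const (𝕂 := ℝ) Z t).const_mul p).mul_const q
  simp only [← mul_assoc] at h
  exact hasDerivAt_iff_tendsto_slope.mp h

theorem hasDerivAt_mul_exp_smul (p Z : Matrix m m ℂ) (t : ℝ) :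
    HasDerivAt (fun s : ℝ => p * NormedSpace.exp (s • Z)) (p * NormedSpace.exp (t • Z) * Z) t := by
  simpa using hasDerivAt_mul_exp_smul_mul p 1 Z t

end MatrixExp

theorem lieD2_eq_fderiv_fderiv {F : Matrix (Fin n) (Fin n) ℂ → ℂ} {p : Matrix (Fin n) (Fin n) ℂ}
    (hF : ∀ᶠ z in 𝓝 p, DifferentiableAt ℂ F z) (hF' : DifferentiableAt ℂ (fderiv ℂ F) p)
    (Z : Matrix (Fin n) (Fin n) ℂ) :
    lieD2 Z F p = fderiv ℂ (fderiv ℂ F) p (p * Z) (p * Z) + fderiv ℂ F p (p * (Z * Z)) := by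
  have hc0 : p * NormedSpace.exp ((0 : ℝ) • Z) = p := by simp
  have h := deriv_deriv_comp_eq (F := F) (c := fun s => p * NormedSpace.exp (s • Z))
    (c' := fun s => p * NormedSpace.exp (s • Z) * Z) (t := 0)
    (Eventually.of_forall fun s => hasDerivAt_mul_exp_smul p Z s)
    (hasDerivAt_mul_exp_smul_mul p Z Z 0) (by rw [hc0]; exact hF) (by rw [hc0]; exact hF')
  rw [lieD2, iteratedDeriv_succ, iteratedDeriv_one, h]
  simp only [zero_smul, NormedSpace.exp_zero, mul_one, mul_assoc]
  -- the two sides differ only in definitionally equal instances on `Matrix`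
  rfl

lemma lieD_zero (f : Matrix (Fin n) (Fin n) ℂ → ℂ) (p : Matrix (Fin n) (Fin n) ℂ) :
    lieD 0 f p = 0 := by
  simp [lieD]

lemma tensTerm_eq_lieD2 {Z : Matrix (Fin n) (Fin n) ℂ} (hZ : Zᵀ = Z ∨ Zᵀ = -Z)
    (f : Matrix (Fin n) (Fin n) ℂ → ℂ) (p : Matrix (Fin n) (Fin n) ℂ) :
    tensTerm Z f p = lieD2 Z f p := by
  have h : Z * Zᵀ - Zᵀ * Z = 0 := by
    rcases hZ with h | h <;> simp [h]
  rw [tensTerm, h, lieD_zero, sub_zero]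

lemma Ybas_transpose (r s : Fin n) : (Ybas r s)ᵀ = -Ybas r s := by
  rw [Ybas, transpose_smul, transpose_sub, transpose_single, transpose_single, ← smul_neg,
    neg_sub]

lemma iXbas_transpose (r s : Fin n) : (iXbas r s)ᵀ = iXbas r s := by
  rw [iXbas, transpose_smul, transpose_smul, transpose_add, transpose_single, transpose_single,
    add_comm]

lemma iDbas_transpose (t : Fin n) : (iDbas t)ᵀ = iDbas t := by
  rw [iDbas, transpose_smul, transpose_single]

noncomputable def unitaryBasisSum {V : Type*} [AddCommMonoid V]
    (φ : Matrix (Fin n) (Fin n) ℂ → V) : V :=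
  (∑ r, ∑ s, if r < s then φ (Ybas r s) + φ (iXbas r s) else 0) + ∑ t, φ (iDbas t)

theorem tension_eq_unitaryBasisSum (f : Matrix (Fin n) (Fin n) ℂ → ℂ)
    (p : Matrix (Fin n) (Fin n) ℂ) : tension f p = unitaryBasisSum fun Z => lieD2 Z f p := by
  simp only [tension, unitaryBasisSum, tensTerm_eq_lieD2 (Or.inr (Ybas_transpose _ _)),
    tensTerm_eq_lieD2 (Or.inl (iXbas_transpose _ _)),
    tensTerm_eq_lieD2 (Or.inl (iDbas_transpose _))]

theorem Fintype.sum_sum_eq_sum_lt_add_sum_diag {ι V : Type*} [Fintype ι] [LinearOrder ι]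
    [AddCommMonoid V] (f : ι → ι → V) :
    ∑ r, ∑ s, f r s = (∑ r, ∑ s, if r < s then f r s + f s r else 0) + ∑ t, f t t := by
  have hsplit (r s : ι) : f r s = (if r < s then f r s else 0) + (if s < r then f r s else 0)
      + if r = s then f r s else 0 := by
    rcases lt_trichotomy r s with h | rfl | h
    · simp [h, h.ne, h.not_gt]
    · simp
    · simp [h, h.ne', h.not_gt]
  have hswap : (∑ r, ∑ s, if s < r then f r s else 0) = ∑ r, ∑ s, if r < s then f s r else 0 :=
    Finset.sum_comm
  rw [Finset.sum_congr rfl fun r _ => Finset.sum_congr rfl fun s _ => hsplit r s]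
  simp only [Finset.sum_add_distrib, hswap, ite_add_zero, Finset.sum_ite_eq, Finset.mem_univ,
    if_true]

theorem LinearMap.apply_smul_sub_add_apply_smul_I_smul_add {M V : Type*} [AddCommGroup M]
    [Module ℂ M] [AddCommGroup V] [Module ℂ V] (B : M →ₗ[ℂ] M →ₗ[ℂ] V) (a b : M) {κ : ℂ}
    (hκ : κ * κ = 2⁻¹) :
    B (κ • (a - b)) (κ • (a - b)) + B (κ • Complex.I • (a + b)) (κ • Complex.I • (a + b))
      = -(B a b + B b a) := by
  simp only [map_smul, map_add, map_sub, LinearMap.smul_apply, LinearMap.add_apply,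
    LinearMap.sub_apply, smul_smul]
  linear_combination (norm := module) hκ • ((-2 : ℂ) • (B a b + B b a))
    + Complex.I_mul_I • (κ * κ) • (B a a + B a b + B b a + B b b)

theorem unitaryBasisSum_apply_self {V : Type*} [AddCommGroup V] [Module ℂ V]
    (B : Matrix (Fin n) (Fin n) ℂ →ₗ[ℂ] Matrix (Fin n) (Fin n) ℂ →ₗ[ℂ] V) :
    (unitaryBasisSum fun Z => B Z Z)
      = -∑ r, ∑ s, B (Matrix.single r s 1) (Matrix.single s r 1) := by
  have hκ : (((Real.sqrt 2)⁻¹ : ℝ) : ℂ) * (((Real.sqrt 2)⁻¹ : ℝ) : ℂ) = 2⁻¹ := by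
    rw [← Complex.ofReal_mul, ← mul_inv, Real.mul_self_sqrt zero_le_two]
    norm_num
  have hpair (r s : Fin n) : B (Ybas r s) (Ybas r s) + B (iXbas r s) (iXbas r s)
      = -(B (Matrix.single r s 1) (Matrix.single s r 1)
        + B (Matrix.single s r 1) (Matrix.single r s 1)) := by
    simp only [Ybas, iXbas, ← Complex.coe_smul]
    exact B.apply_smul_sub_add_apply_smul_I_smul_add _ _ hκ
  have hdiag (t : Fin n) :
      B (iDbas t) (iDbas t) = -B (Matrix.single t t 1) (Matrix.single t t 1) := by
    simp only [iDbas, map_smul, LinearMap.smul_apply, smul_smul, Complex.I_mul_I, neg_one_smul]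
  rw [Fintype.sum_sum_eq_sum_lt_add_sum_diag, neg_add, unitaryBasisSum]
  simp only [hpair, hdiag, ← Finset.sum_neg_distrib, apply_ite (fun x : V => -x), neg_zero]

section Coordinates

variable {m : Type*} [Fintype m] [DecidableEq m]

lemma Matrix.mul_single_one_eq_sum {α : Type*} [Semiring α] (p : Matrix m m α) (r s : m) :
    p * Matrix.single r s 1 = ∑ k, p k r • Matrix.single k s 1 := by
  ext a b
  by_cases hs : s = b <;> simp [Matrix.mul_apply, Matrix.single, Matrix.sum_apply, hs]

lemma ContinuousLinearMap.eq_sum_apply_single_mul (L : Matrix m m ℂ →L[ℂ] ℂ) (X : Matrix m m ℂ) :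
    L X = ∑ i, ∑ j, L (Matrix.single i j 1) * X i j := by
  have hX (i j : m) : Matrix.single i j (X i j) = X i j • Matrix.single i j (1 : ℂ) := by
    rw [Matrix.smul_single, smul_eq_mul, mul_one]
  conv_lhs => rw [Matrix.matrix_eq_sum_single X]
  simp only [hX, map_sum, map_smul, smul_eq_mul, mul_comm]

lemma sum_sum_apply_apply_mul_single (H : Matrix m m ℂ →L[ℂ] Matrix m m ℂ →L[ℂ] ℂ)
    (p : Matrix m m ℂ) :
    ∑ r, ∑ s, H (p * Matrix.single r s 1) (p * Matrix.single s r 1)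
      = ∑ i, ∑ j, ∑ k, ∑ l, H (Matrix.single k l 1) (Matrix.single i j 1) * p k j * p i l := by
  simp only [Matrix.mul_single_one_eq_sum, map_sum, map_smul, _root_.sum_apply,
    _root_.smul_apply, smul_eq_mul, Finset.mul_sum]
  calc _ = ∑ j, ∑ i, ∑ l, ∑ k, p i l * (p k j * H (Matrix.single k l 1) (Matrix.single i j 1)) :=
        Finset.sum_congr rfl fun _ _ => Finset.sum_comm
    _ = ∑ j, ∑ i, ∑ k, ∑ l, p i l * (p k j * H (Matrix.single k l 1) (Matrix.single i j 1)) :=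
        Finset.sum_congr rfl fun _ _ => Finset.sum_congr rfl fun _ _ => Finset.sum_comm
    _ = _ := by
        rw [Finset.sum_comm]
        simp only [mul_comm]

lemma sum_sum_apply_mul_single_mul_single (L : Matrix m m ℂ →L[ℂ] ℂ) (p : Matrix m m ℂ) :
    ∑ r, ∑ s, L (p * (Matrix.single r s 1 * Matrix.single s r 1))
      = Fintype.card m * ∑ i, ∑ j, L (Matrix.single i j 1) * p i j := by
  simp only [Matrix.single_mul_single_same, mul_one, Finset.sum_const, Finset.card_univ,
    nsmul_eq_mul, ← Finset.mul_sum, ← map_sum, Matrix.sum_single_one,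
    L.eq_sum_apply_single_mul p]

end Coordinates

theorem stmt_14_general (F : Matrix (Fin n) (Fin n) ℂ → ℂ)
    (U : Set (Matrix (Fin n) (Fin n) ℂ)) (hU : IsOpen U)
    (hF : DifferentiableOn ℂ F U)
    (p : Matrix (Fin n) (Fin n) ℂ) (hpU : p ∈ U) :
    tension F p
      = -(∑ i, ∑ j, ∑ k, ∑ l, cpd k l (cpd i j F) p * p k j * p i l)
        - (n : ℂ) * ∑ i, ∑ j, cpd i j F p * p i j := by
  have hFp : ∀ᶠ z in 𝓝 p, DifferentiableAt ℂ F z :=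
    eventually_of_mem (hU.mem_nhds hpU) fun z hz => hF.differentiableAt (hU.mem_nhds hz)
  have hF' := hF.differentiableAt_fderiv hU hpU
  set H := fderiv ℂ (fderiv ℂ F) p
  set L := fderiv ℂ F p
  have hcpd (i j : Fin n) : cpd i j F p = L (Matrix.single i j 1) := rfl
  have hcpd2 (i j k l : Fin n) :
      cpd k l (cpd i j F) p = H (Matrix.single k l 1) (Matrix.single i j 1) :=
    fderiv_fderiv_apply hF' _ _
  let B : Matrix (Fin n) (Fin n) ℂ →ₗ[ℂ] Matrix (Fin n) (Fin n) ℂ →ₗ[ℂ] ℂ :=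
    LinearMap.mk₂ ℂ (fun X Y => H (p * X) (p * Y) + L (p * (X * Y)))
      (by intros; simp only [mul_add, add_mul, map_add, _root_.add_apply]; ring)
      (by intros; simp; ring)
      (by intros; simp only [mul_add, map_add]; ring)
      (by intros; simp; ring)
  calc tension F p = unitaryBasisSum fun Z => B Z Z := by
        rw [tension_eq_unitaryBasisSum]
        exact congrArg _ (funext (lieD2_eq_fderiv_fderiv hFp hF'))
    _ = -∑ r, ∑ s, B (Matrix.single r s 1) (Matrix.single s r 1) := unitaryBasisSum_apply_self B
    _ = _ := by
        simp only [B, LinearMap.mk₂_apply, Finset.sum_add_distrib, neg_add,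
          sum_sum_apply_apply_mul_single, sum_sum_apply_mul_single_mul_single, Fintype.card_fin,
          hcpd, hcpd2, sub_eq_add_neg]

/-- if `f` is the restriction to `U(n)` of a holomorphic function `F`
on an open subset of `GL(n,ℂ)`, then at `p ∈ U(n)`
`τ(f) = −Σ_{i,j,k,ℓ} (∂²F/∂z_{ij}∂z_{kℓ}) z_{kj} z_{iℓ} − n Σ_{i,j} (∂F/∂z_{ij}) z_{ij}`. -/
theorem stmt_14 (F : Matrix (Fin n) (Fin n) ℂ → ℂ)
    (U : Set (Matrix (Fin n) (Fin n) ℂ)) (hU : IsOpen U)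
    (hF : DifferentiableOn ℂ F U)
    (p : Matrix (Fin n) (Fin n) ℂ) (hpU : p ∈ U)
    (hp : p ∈ Matrix.unitaryGroup (Fin n) ℂ) :
    tension F p
      = -(∑ i, ∑ j, ∑ k, ∑ l, cpd k l (cpd i j F) p * p k j * p i l)
        - (n : ℂ) * ∑ i, ∑ j, cpd i j F p * p i j :=
  stmt_14_general F U hU hF p hpU
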